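/- Let z, ω ∈ ℝ with z > 0 and ω > 0. Define F_z : ℝ × ℝ → ℝ by F_z(a, b) = exp((b − a)·log z)/(z + 1) · (z if b < a, and −1 if a ≤ b), and similarly F_ω with ω in place of z. Then ∫₀¹ ∫₀¹ τ(τ − 1)·F_z(σ, τ)·F_z(τ, σ)·F_ω(σ, τ)·F_ω(τ, σ) dσ dτ = −z·ω/(6(z + 1)²(ω + 1)²). -/

import Mathlib

/-! Off the diagonal `σ = τ` the exponentials in `F_z(σ,τ) F_z(τ,σ)` cancel and the two step
factors multiply to `z · (-1)`, so `F_z(σ,τ) F_z(τ,σ) = -z/(z+1)²`, and likewise for `ω`.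
The diagonal is a null set, so the inner integral is `τ(τ-1)·zω/((z+1)²(ω+1)²)`, and
`∫₀¹ τ(τ-1) dτ = -1/6`. -/

open Real

/-- `fermionPropagator z (τ, σ)` is the paper's `F(z, τ, σ)`, with `exp (x * log z)` for `z ^ x`. -/
noncomputable def fermionPropagator (z : ℝ) (p : ℝ × ℝ) : ℝ :=
  exp ((p.2 - p.1) * log z) / (z + 1) * (if p.2 < p.1 then z else -1)

theorem fermionPropagator_mul_swap_of_lt (z : ℝ) {a b : ℝ} (h : b < a) :
    fermionPropagator z (a, b) * fermionPropagator z (b, a) = -z / (z + 1) ^ 2 := by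
  have hexp : exp ((b - a) * log z) * exp ((a - b) * log z) = 1 := by
    rw [← exp_add, show (b - a) * log z + (a - b) * log z = 0 by ring, exp_zero]
  simp only [fermionPropagator, if_pos h, if_neg (not_lt.2 h.le), div_eq_mul_inv, ← inv_pow]
  linear_combination (-z * (z + 1)⁻¹ ^ 2) * hexp

theorem fermionPropagator_mul_swap (z : ℝ) {a b : ℝ} (h : a ≠ b) :
    fermionPropagator z (a, b) * fermionPropagator z (b, a) = -z / (z + 1) ^ 2 := by
  rcases h.lt_or_gt with h | h
  · rw [mul_comm, fermionPropagator_mul_swap_of_lt z h]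
  · exact fermionPropagator_mul_swap_of_lt z h

theorem intervalIntegral_eq_of_eq_off_point {f g : ℝ → ℝ} {a b x₀ : ℝ}
    (h : ∀ x, x ≠ x₀ → f x = g x) : ∫ x in a..b, f x = ∫ x in a..b, g x :=
  intervalIntegral.integral_congr_ae <|
    (Set.countable_singleton x₀).ae_notMem _ |>.mono fun x hx _ => h x hx

theorem integral_mul_sub_one_zero_one : ∫ τ in (0 : ℝ)..1, τ * (τ - 1) = -1 / 6 := by
  have hpoly : (fun τ : ℝ => τ * (τ - 1)) = fun τ => τ ^ 2 - τ := by ext; ring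
  rw [hpoly, intervalIntegral.integral_sub ((continuous_pow 2).intervalIntegrable 0 1)
    (continuous_id'.intervalIntegrable 0 1), integral_pow, integral_id]
  norm_num

theorem worldline_integral_mixed_flavor_general (z ω : ℝ)
    (Fz Fω : ℝ × ℝ → ℝ)
    (hFz : Fz = fun p => Real.exp ((p.2 - p.1) * Real.log z) / (z + 1) *
      (if p.2 < p.1 then z else -1))
    (hFω : Fω = fun p => Real.exp ((p.2 - p.1) * Real.log ω) / (ω + 1) *
      (if p.2 < p.1 then ω else -1)) :
    (∫ τ in (0 : ℝ)..1, ∫ σ in (0 : ℝ)..1,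
        τ * (τ - 1) * Fz (σ, τ) * Fz (τ, σ) * Fω (σ, τ) * Fω (τ, σ)) =
      -(z * ω) / (6 * (z + 1) ^ 2 * (ω + 1) ^ 2) := by
  change Fz = fermionPropagator z at hFz
  change Fω = fermionPropagator ω at hFω
  subst hFz hFω
  have inner_integral (τ : ℝ) : ∫ σ in (0 : ℝ)..1, τ * (τ - 1) * fermionPropagator z (σ, τ) *
      fermionPropagator z (τ, σ) * fermionPropagator ω (σ, τ) * fermionPropagator ω (τ, σ) =
      τ * (τ - 1) * (-z / (z + 1) ^ 2 * (-ω / (ω + 1) ^ 2)) := by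
    rw [intervalIntegral_eq_of_eq_off_point (g := fun _ => τ * (τ - 1) *
      (-z / (z + 1) ^ 2 * (-ω / (ω + 1) ^ 2))) (x₀ := τ) fun σ hσ => by
        rw [← fermionPropagator_mul_swap z hσ, ← fermionPropagator_mul_swap ω hσ]; ring]
    simp
  simp_rw [inner_integral, intervalIntegral.integral_mul_const, integral_mul_sub_one_zero_one,
    div_eq_mul_inv, mul_inv]
  ring

/-- Mixed-flavor worldline integral from the `a₃` Seeley–DeWitt computation: with the two
`N = 2` fermionic propagators `F_z` and `F_ω` and the coincident-point bosonic propagator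
`τ(τ−1)`, one has
`∫₀¹∫₀¹ τ(τ−1)·F_z(σ,τ)·F_z(τ,σ)·F_ω(σ,τ)·F_ω(τ,σ) dσ dτ = −zω/(6(z+1)²(ω+1)²)`. -/
theorem worldline_integral_mixed_flavor (z ω : ℝ) (hz : 0 < z) (hω : 0 < ω)
    (Fz Fω : ℝ × ℝ → ℝ)
    (hFz : Fz = fun p => Real.exp ((p.2 - p.1) * Real.log z) / (z + 1) *
      (if p.2 < p.1 then z else -1))
    (hFω : Fω = fun p => Real.exp ((p.2 - p.1) * Real.log ω) / (ω + 1) *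
      (if p.2 < p.1 then ω else -1)) :
    (∫ τ in (0 : ℝ)..1, ∫ σ in (0 : ℝ)..1,
        τ * (τ - 1) * Fz (σ, τ) * Fz (τ, σ) * Fω (σ, τ) * Fω (τ, σ)) =
      -(z * ω) / (6 * (z + 1) ^ 2 * (ω + 1) ^ 2) :=
  worldline_integral_mixed_flavor_general z ω Fz Fω hFz hFω
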